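/- Let P be a partial order, f an order automorphism of P, and x, y, c ∈ P with f(c) = c and x < c < y. Then x' < y' for all x' ∼_f x and all y' ∼_f y (the orbital of x is strongly below the orbital of y); equivalently, x < f^n(y) for every n : ℤ. -/

import Mathlib

variable {P : Type*} [PartialOrder P]

/-- `x ∼_f y` iff there are `i j : ℤ` with `f^i x ≤ y ≤ f^j x`. -/
def orbRel (f : P ≃o P) (x y : P) : Prop :=
  ∃ i j : ℤ, (f ^ i) x ≤ y ∧ y ≤ (f ^ j) x

theorem RelIso.zpow_apply_eq_self_of_apply_eq_self {α : Type*} {r : α → α → Prop}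
    {f : r ≃r r} {c : α} (hc : f c = c) (n : ℤ) : (f ^ n) c = c :=
  (MulAction.stabilizer (r ≃r r) c).zpow_mem (MulAction.mem_stabilizer_iff.mpr hc) n

theorem orbRel_refl (f : P ≃o P) (x : P) : orbRel f x x :=
  ⟨0, 0, le_rfl, le_rfl⟩

theorem orbRel_zpow_apply (f : P ≃o P) (n : ℤ) (x : P) : orbRel f ((f ^ n) x) x := by
  refine ⟨-n, -n, ?_, ?_⟩ <;> rw [zpow_neg, RelIso.inv_apply_self]

theorem lt_of_orbRel_of_lt_fixedPt {f : P ≃o P} {x x' c : P} (hc : f c = c)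
    (hx' : orbRel f x' x) (hxc : x < c) : x' < c := by
  obtain ⟨i, -, hi, -⟩ := hx'
  rw [← (f ^ i).lt_iff_lt, RelIso.zpow_apply_eq_self_of_apply_eq_self hc]
  exact hi.trans_lt hxc

theorem fixedPt_lt_of_orbRel_of_lt {f : P ≃o P} {y y' c : P} (hc : f c = c)
    (hy' : orbRel f y' y) (hcy : c < y) : c < y' := by
  obtain ⟨-, j, -, hj⟩ := hy'
  rw [← (f ^ j).lt_iff_lt, RelIso.zpow_apply_eq_self_of_apply_eq_self hc]
  exact hcy.trans_le hj

/-- Forcing the strong order by fixed points: if `f c = c` and `x < c < y`, then the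
orbital of `x` is strongly below the orbital of `y`: `x' < y'` for all `x' ∼_f x` and
`y' ∼_f y`; equivalently, `x < f^n y` for every `n : ℤ`. -/
theorem fixed_point_between_forces_strongLt (f : P ≃o P) (x y c : P)
    (hc : f c = c) (hxc : x < c) (hcy : c < y) :
    (∀ x' y' : P, orbRel f x' x → orbRel f y' y → x' < y') ∧
    (∀ n : ℤ, x < (f ^ n) y) := by
  have strongLt : ∀ x' y' : P, orbRel f x' x → orbRel f y' y → x' < y' := fun _ _ hx' hy' =>
    (lt_of_orbRel_of_lt_fixedPt hc hx' hxc).trans (fixedPt_lt_of_orbRel_of_lt hc hy' hcy)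
  exact ⟨strongLt, fun n => strongLt x _ (orbRel_refl f x) (orbRel_zpow_apply f n y)⟩
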